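/- arXiv:1401.6980 — 3 statements merged into one kernel-verified Lean document; each statement's English description precedes it below -/
import Mathlib

section
/- For every d ∈ {1,2,3} there exists a constant C > 0 such that for all t > 0 and all κ > 0, both integrals ∫_0^t s^{(d−1)/2}·(t−s)^{d/2}·(coth(κs))^{d/2} ds and ∫_0^t s^{(d−1)/2}·(t−s)^{d/2}·(coth(κ(t−s)))^{d/2} ds are bounded above by C · ((1+κ)^{d/2}/κ^{d/2}) · (1+t)^{d/2} · t^{(d+1)/2}. -/
open Real MeasureTheory

lemma coth_le_one_add_inv (x : ℝ) (hx : 0 < x) :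
    Real.cosh x / Real.sinh x ≤ (1 + x) / x := by
  rw [div_le_div_iff₀ (Real.sinh_pos_iff.2 hx) hx, Real.cosh_eq, Real.sinh_eq]
  have h1 := Real.add_one_le_exp (2 * x)
  have h2 := Real.exp_pos (-x)
  have h3 : Real.exp (2 * x) = Real.exp x * Real.exp x := by
    rw [← Real.exp_add]; ring_nf
  have h4 : Real.exp x * Real.exp (-x) = 1 := by
    rw [← Real.exp_add]; simp
  nlinarith [Real.exp_pos x, mul_pos h2 hx]

lemma bound_aux (a r t : ℝ) (hr : -1 < r) (ht : 0 < t) (ha : 0 ≤ a) (f : ℝ → ℝ)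
    (hf : ∀ s ∈ Set.Ioo (0 : ℝ) t, 0 ≤ f s ∧ f s ≤ a * s ^ r) :
    (∫ s in Set.Ioo (0 : ℝ) t, f s) ≤ a * (t ^ (r + 1) / (r + 1)) := by
  have hint : IntegrableOn (fun s : ℝ => a * s ^ r) (Set.Ioo 0 t) := by
    have h := (intervalIntegral.intervalIntegrable_rpow' (a := 0) (b := t) hr)
    have h2 : IntegrableOn (fun s : ℝ => s ^ r) (Set.Ioc 0 t) := by
      simpa [intervalIntegrable_iff, Set.uIoc_of_le ht.le] using h
    exact (h2.mono_set Set.Ioo_subset_Ioc_self).const_mul a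
  have h1 : (∫ s in Set.Ioo (0 : ℝ) t, f s) ≤ ∫ s in Set.Ioo (0 : ℝ) t, a * s ^ r := by
    refine integral_mono_of_nonneg ?_ hint ?_
    · exact (ae_restrict_iff' measurableSet_Ioo).2 (ae_of_all _ fun s hs => (hf s hs).1)
    · exact (ae_restrict_iff' measurableSet_Ioo).2 (ae_of_all _ fun s hs => (hf s hs).2)
  have h2 : (∫ s in Set.Ioo (0 : ℝ) t, a * s ^ r) = a * (t ^ (r + 1) / (r + 1)) := by
    rw [← MeasureTheory.integral_Ioc_eq_integral_Ioo,
      ← intervalIntegral.integral_of_le ht.le, intervalIntegral.integral_const_mul,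
      integral_rpow (Or.inl hr), Real.zero_rpow (by linarith), sub_zero]
  linarith

/-- Uniform bound on the two convolution-type integrals involving `coth`. -/
theorem coth_convolution_integral_bound (d : ℕ) (hd : d = 1 ∨ d = 2 ∨ d = 3) :
    ∃ C > 0, ∀ t > (0 : ℝ), ∀ κ > (0 : ℝ),
      ((∫ s in Set.Ioo (0 : ℝ) t, s ^ (((d : ℝ) - 1) / 2) * (t - s) ^ ((d : ℝ) / 2) *
          (Real.cosh (κ * s) / Real.sinh (κ * s)) ^ ((d : ℝ) / 2)) ≤
        C * ((1 + κ) ^ ((d : ℝ) / 2) / κ ^ ((d : ℝ) / 2)) *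
          (1 + t) ^ ((d : ℝ) / 2) * t ^ (((d : ℝ) + 1) / 2)) ∧
      ((∫ s in Set.Ioo (0 : ℝ) t, s ^ (((d : ℝ) - 1) / 2) * (t - s) ^ ((d : ℝ) / 2) *
          (Real.cosh (κ * (t - s)) / Real.sinh (κ * (t - s))) ^ ((d : ℝ) / 2)) ≤
        C * ((1 + κ) ^ ((d : ℝ) / 2) / κ ^ ((d : ℝ) / 2)) *
          (1 + t) ^ ((d : ℝ) / 2) * t ^ (((d : ℝ) + 1) / 2)) := by
  have hd1 : (1 : ℝ) ≤ (d : ℝ) := by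
    rcases hd with h | h | h <;> simp [h] <;> norm_num
  set p : ℝ := ((d : ℝ) - 1) / 2 with hp
  set q : ℝ := (d : ℝ) / 2 with hq
  have hp0 : 0 ≤ p := by simp only [hp]; linarith
  have hq0 : 0 ≤ q := by positivity
  refine ⟨2, by norm_num, fun t ht κ hκ => ?_⟩
  set B : ℝ := (1 + κ) * (1 + t) / κ with hB
  have hB0 : 0 < B := by positivity
  have hBq : B ^ q = (1 + κ) ^ q * (1 + t) ^ q / κ ^ q := by
    rw [hB, Real.div_rpow (by positivity) hκ.le, Real.mul_rpow (by positivity) (by positivity)]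
  -- key pointwise bound on coth term
  have key : ∀ x : ℝ, 0 < x → x ≤ t →
      (Real.cosh (κ * x) / Real.sinh (κ * x)) ^ q ≤ B ^ q * x ^ (-q) := by
    intro x hx hxt
    have h1 : Real.cosh (κ * x) / Real.sinh (κ * x) ≤ (1 + κ * x) / (κ * x) :=
      coth_le_one_add_inv _ (by positivity)
    have h2 : (1 + κ * x) / (κ * x) ≤ B / x := by
      rw [hB, div_le_div_iff₀ (by positivity) hx, div_mul_eq_mul_div,
        le_div_iff₀ hκ]
      nlinarith [mul_pos hκ hx, mul_le_mul_of_nonneg_left hxt hκ.le,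
        mul_le_mul_of_nonneg_left (mul_le_mul_of_nonneg_left hxt hκ.le) (mul_pos hκ hx).le,
        mul_nonneg (mul_pos hκ hx).le hκ.le, mul_nonneg (mul_pos hκ hx).le ht.le,
        mul_nonneg (mul_pos hκ hx).le (mul_pos hκ ht).le]
    have h3 : (Real.cosh (κ * x) / Real.sinh (κ * x)) ^ q ≤ (B / x) ^ q :=
      Real.rpow_le_rpow (div_nonneg ((Real.cosh_pos _).le)
        (Real.sinh_pos_iff.2 (by positivity)).le) (h1.trans h2) hq0
    calc (Real.cosh (κ * x) / Real.sinh (κ * x)) ^ q ≤ (B / x) ^ q := h3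
      _ = B ^ q * x ^ (-q) := by
          rw [Real.div_rpow hB0.le hx.le, Real.rpow_neg hx.le, div_eq_mul_inv]
  have hcoshpos : ∀ x : ℝ, 0 < x →
      0 ≤ (Real.cosh (κ * x) / Real.sinh (κ * x)) ^ q := fun x hx =>
    Real.rpow_nonneg (div_nonneg (Real.cosh_pos _).le (Real.sinh_pos_iff.2 (by positivity)).le) _
  constructor
  · -- first integral
    refine le_trans (bound_aux (B ^ q * t ^ q) (-(1/2)) t (by norm_num) ht
      (by positivity)
      (fun s => s ^ p * (t - s) ^ q * (Real.cosh (κ * s) / Real.sinh (κ * s)) ^ q)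
      (fun s hs => ?_)) ?_
    swap
    · refine le_of_eq ?_
      have heq : t ^ (((d:ℝ) + 1)/2) = t ^ q * t ^ (-(1/2 : ℝ) + 1) := by
        rw [← Real.rpow_add ht]; congr 1; simp only [hq]; ring
      rw [hBq, heq]; ring
    · obtain ⟨hs0, hst⟩ := hs
      constructor
      · have := hcoshpos s hs0
        have h1 : (0:ℝ) ≤ s ^ p := Real.rpow_nonneg hs0.le _
        have h2 : (0:ℝ) ≤ (t - s) ^ q := Real.rpow_nonneg (by linarith) _
        positivity
      · have hk := key s hs0 hst.le
        have hts : (t - s) ^ q ≤ t ^ q :=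
          Real.rpow_le_rpow (by linarith) (by linarith) hq0
        have hsp : (0:ℝ) ≤ s ^ p := Real.rpow_nonneg hs0.le _
        calc s ^ p * (t - s) ^ q * (Real.cosh (κ * s) / Real.sinh (κ * s)) ^ q
            ≤ s ^ p * t ^ q * (B ^ q * s ^ (-q)) := by
              apply mul_le_mul
              · exact mul_le_mul_of_nonneg_left hts hsp
              · exact hk
              · exact hcoshpos s hs0
              · positivity
          _ = B ^ q * t ^ q * s ^ (-(1/2 : ℝ)) := by
              have hpq : p + -q = -(1/2 : ℝ) := by simp only [hp, hq]; ring
              rw [show s ^ p * t ^ q * (B ^ q * s ^ (-q)) =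
                B ^ q * t ^ q * (s ^ p * s ^ (-q)) by ring, ← Real.rpow_add hs0, hpq]
  · -- second integral
    refine le_trans (bound_aux (B ^ q) p t (by linarith) ht (by positivity)
      (fun s => s ^ p * (t - s) ^ q *
        (Real.cosh (κ * (t - s)) / Real.sinh (κ * (t - s))) ^ q)
      (fun s hs => ?_)) ?_
    swap
    · have hpe : t ^ (((d:ℝ) + 1)/2) = t ^ (p + 1) := by
        congr 1; simp only [hp]; ring
      rw [hBq, hpe]
      have hnn : (0:ℝ) ≤ (1 + κ) ^ q * (1 + t) ^ q / κ ^ q := by positivity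
      have h1 : t ^ (p + 1) / (p + 1) ≤ t ^ (p + 1) :=
        div_le_self (Real.rpow_nonneg ht.le _) (by simp only [hp]; linarith)
      have h2 := mul_le_mul_of_nonneg_left h1 hnn
      have h3 : (0:ℝ) ≤ (1 + κ) ^ q * (1 + t) ^ q / κ ^ q * t ^ (p + 1) :=
        mul_nonneg hnn (Real.rpow_nonneg ht.le _)
      calc (1 + κ) ^ q * (1 + t) ^ q / κ ^ q * (t ^ (p + 1) / (p + 1))
          ≤ (1 + κ) ^ q * (1 + t) ^ q / κ ^ q * t ^ (p + 1) := h2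
        _ ≤ 2 * ((1 + κ) ^ q * (1 + t) ^ q / κ ^ q * t ^ (p + 1)) := by linarith
        _ = 2 * ((1 + κ) ^ q / κ ^ q) * (1 + t) ^ q * t ^ (p + 1) := by ring
    · obtain ⟨hs0, hst⟩ := hs
      have hts0 : (0:ℝ) < t - s := by linarith
      constructor
      · have := hcoshpos (t - s) hts0
        have h1 : (0:ℝ) ≤ s ^ p := Real.rpow_nonneg hs0.le _
        have h2 : (0:ℝ) ≤ (t - s) ^ q := Real.rpow_nonneg hts0.le _
        positivity
      · have hk := key (t - s) hts0 (by linarith)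
        have hsp : (0:ℝ) ≤ s ^ p := Real.rpow_nonneg hs0.le _
        have htsq : (0:ℝ) ≤ (t - s) ^ q := Real.rpow_nonneg hts0.le _
        calc s ^ p * (t - s) ^ q * (Real.cosh (κ * (t - s)) / Real.sinh (κ * (t - s))) ^ q
            ≤ s ^ p * (t - s) ^ q * (B ^ q * (t - s) ^ (-q)) := by
              apply mul_le_mul_of_nonneg_left hk (by positivity)
          _ = B ^ q * s ^ p := by
              rw [show s ^ p * (t-s) ^ q * (B ^ q * (t-s) ^ (-q)) =
                B ^ q * s ^ p * ((t-s) ^ q * (t-s) ^ (-q)) by ring, ← Real.rpow_add hts0]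
              simp
end

section
/- (Semigroup property of the generalized Mehler kernel) For every d ∈ {1,2,3}, every κ > 0, every γ > 0, every δ > 0, all t > 0 and 0 < u < t, and all x, y ∈ ℝ^d, one has ∫_{ℝ^d} G_κ^{(d)}(x,z;δ(t−u),γ) · G_κ^{(d)}(z,y;δu,γ) dz = γ^{d/2} · G_κ^{(d)}(x,y;δt,γ). -/
open Real MeasureTheory

/-- The generalized d-dimensional Mehler kernel `G_κ^{(d)}(x,y;t,γ)`.
Here `cosh/sinh` plays the role of `coth`. -/
noncomputable def mehlerG (d : ℕ) (κ t γ : ℝ) (x y : Fin d → ℝ) : ℝ :=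
  (κ / (2 * Real.pi * Real.sinh (κ * t))) ^ ((d : ℝ) / 2) *
    ∏ j, Real.exp (-(κ / (4 * γ)) * ((x j + y j) ^ 2 * Real.tanh (κ * t / 2) +
      (x j - y j) ^ 2 * (Real.cosh (κ * t / 2) / Real.sinh (κ * t / 2))))

/-
By the half-angle identities `tanh (p/2) = (cosh p - 1) / sinh p` and
`coth (p/2) = (cosh p + 1) / sinh p`, the kernel is a product over coordinates of one-dimensional
kernels `√(κ / (2π sinh p)) exp (-(κ / 2γ) (cosh p (x² + y²) - 2xy) / sinh p)` with `p = κ t`,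
so by Fubini it suffices to compose two of these. In the exponent of the product, the coefficient
of `z²` is `coth a + coth b = sinh (a + b) / (sinh a sinh b)`; completing the square leaves exactly
the exponent at time `a + b`, and the Gaussian integral over `z` contributes
`√(π sinh a sinh b / ((κ / 2γ) sinh (a + b)))`, which together with the two prefactors gives `√γ`
times the prefactor at time `a + b`.
-/

open Finset

noncomputable def mehlerKernel (κ γ p x y : ℝ) : ℝ :=
  √(κ / (2 * π * sinh p)) * exp (-(κ / (2 * γ)) * ((cosh p * (x ^ 2 + y ^ 2) - 2 * x * y) / sinh p))

lemma sq_add_mul_tanh_half_add_sq_sub_mul_coth_half {p : ℝ} (hp : p ≠ 0) (x y : ℝ) :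
    (x + y) ^ 2 * tanh (p / 2) + (x - y) ^ 2 * (cosh (p / 2) / sinh (p / 2))
      = 2 * ((cosh p * (x ^ 2 + y ^ 2) - 2 * x * y) / sinh p) := by
  have hs : sinh (p / 2) ≠ 0 := sinh_ne_zero.2 (by simpa using hp)
  have hc : cosh (p / 2) ≠ 0 := (cosh_pos _).ne'
  have hsinh : sinh p = 2 * sinh (p / 2) * cosh (p / 2) := by
    rw [← sinh_two_mul, mul_div_cancel₀ _ two_ne_zero]
  have hcosh : cosh p = cosh (p / 2) ^ 2 + sinh (p / 2) ^ 2 := by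
    rw [← cosh_two_mul, mul_div_cancel₀ _ two_ne_zero]
  rw [tanh_eq_sinh_div_cosh, hsinh, hcosh]
  field_simp
  linear_combination (-2 * x * y) * cosh_sq_sub_sinh_sq (p / 2)

lemma mehlerG_eq_prod_mehlerKernel (d : ℕ) {κ t : ℝ} (hκ : 0 < κ) (ht : 0 < t) (γ : ℝ)
    (x y : Fin d → ℝ) :
    mehlerG d κ t γ x y = ∏ j, mehlerKernel κ γ (κ * t) (x j) (y j) := by
  have hp : 0 < κ * t := mul_pos hκ ht
  have hbase : 0 ≤ κ / (2 * π * sinh (κ * t)) := by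
    have := sinh_pos_iff.2 hp
    positivity
  simp only [mehlerG, mehlerKernel, prod_mul_distrib, prod_const, card_univ, Fintype.card_fin,
    rpow_div_two_eq_sqrt _ hbase, rpow_natCast,
    sq_add_mul_tanh_half_add_sq_sub_mul_coth_half hp.ne']
  congr 1
  refine prod_congr rfl fun j _ => congr_arg exp ?_
  ring

lemma mehler_exponent_add_eq {a b : ℝ} (ha : a ≠ 0) (hb : b ≠ 0) (hab : a + b ≠ 0) (x y z : ℝ) :
    (cosh a * (x ^ 2 + z ^ 2) - 2 * x * z) / sinh a
        + (cosh b * (z ^ 2 + y ^ 2) - 2 * z * y) / sinh b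
      = sinh (a + b) / (sinh a * sinh b) * (z - (x * sinh b + y * sinh a) / sinh (a + b)) ^ 2
        + (cosh (a + b) * (x ^ 2 + y ^ 2) - 2 * x * y) / sinh (a + b) := by
  have hsa : sinh a ≠ 0 := sinh_ne_zero.2 ha
  have hsb : sinh b ≠ 0 := sinh_ne_zero.2 hb
  have hsab : sinh (a + b) ≠ 0 := sinh_ne_zero.2 hab
  rw [cosh_add]
  field_simp
  rw [sinh_add]
  linear_combination (x ^ 2 * sinh b ^ 2) * cosh_sq_sub_sinh_sq a
    + (y ^ 2 * sinh a ^ 2) * cosh_sq_sub_sinh_sq b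

lemma integral_mehlerKernel_mul {κ γ p q : ℝ} (hκ : 0 < κ) (hγ : 0 < γ) (hp : 0 < p) (hq : 0 < q)
    (x y : ℝ) :
    ∫ z, mehlerKernel κ γ p x z * mehlerKernel κ γ q z y = √γ * mehlerKernel κ γ (p + q) x y := by
  have hsp := sinh_pos_iff.2 hp
  have hsq := sinh_pos_iff.2 hq
  have hspq := sinh_pos_iff.2 (add_pos hp hq)
  set A := κ / (2 * γ) * (sinh (p + q) / (sinh p * sinh q))
  set m := (x * sinh q + y * sinh p) / sinh (p + q)
  have hprod : ∀ z, mehlerKernel κ γ p x z * mehlerKernel κ γ q z y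
      = √(κ / (2 * π * sinh p)) * √(κ / (2 * π * sinh q))
        * exp (-(κ / (2 * γ)) * ((cosh (p + q) * (x ^ 2 + y ^ 2) - 2 * x * y) / sinh (p + q)))
        * exp (-A * (z - m) ^ 2) := by
    intro z
    rw [mehlerKernel, mehlerKernel, mul_mul_mul_comm, ← exp_add, ← mul_add,
      mehler_exponent_add_eq hp.ne' hq.ne' (add_pos hp hq).ne', mul_add, exp_add]
    simp only [A, m]
    ring_nf
  have hprefactor : √(κ / (2 * π * sinh p)) * √(κ / (2 * π * sinh q)) * √(π / A)
      = √γ * √(κ / (2 * π * sinh (p + q))) := by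
    rw [← sqrt_mul (by positivity), ← sqrt_mul (by positivity), ← sqrt_mul hγ.le]
    congr 1
    simp only [A]
    field_simp
  simp_rw [hprod]
  rw [integral_const_mul, integral_sub_right_eq_self (fun z => exp (-A * z ^ 2)) m,
    integral_gaussian, mehlerKernel, mul_right_comm, hprefactor]
  ring

theorem mehlerG_semigroup_general (d : ℕ) (κ γ δ t u : ℝ)
    (hκ : 0 < κ) (hγ : 0 < γ) (hδ : 0 < δ) (hu : 0 < u) (hut : u < t)
    (x y : Fin d → ℝ) :
    ∫ z : Fin d → ℝ, mehlerG d κ (δ * (t - u)) γ x z * mehlerG d κ (δ * u) γ z y =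
      γ ^ ((d : ℝ) / 2) * mehlerG d κ (δ * t) γ x y := by
  have hp : 0 < δ * (t - u) := mul_pos hδ (sub_pos.2 hut)
  have hq : 0 < δ * u := mul_pos hδ hu
  have htime : κ * (δ * (t - u)) + κ * (δ * u) = κ * (δ * t) := by ring
  calc _ = ∫ z : Fin d → ℝ, ∏ j, mehlerKernel κ γ (κ * (δ * (t - u))) (x j) (z j)
          * mehlerKernel κ γ (κ * (δ * u)) (z j) (y j) := by
        simp_rw [mehlerG_eq_prod_mehlerKernel d hκ hp, mehlerG_eq_prod_mehlerKernel d hκ hq,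
          prod_mul_distrib]
    _ = ∏ j, ∫ w, mehlerKernel κ γ (κ * (δ * (t - u))) (x j) w
          * mehlerKernel κ γ (κ * (δ * u)) w (y j) :=
        integral_fintype_prod_volume_eq_prod fun j w =>
          mehlerKernel κ γ (κ * (δ * (t - u))) (x j) w * mehlerKernel κ γ (κ * (δ * u)) w (y j)
    _ = γ ^ ((d : ℝ) / 2) * mehlerG d κ (δ * t) γ x y := by
        simp_rw [integral_mehlerKernel_mul hκ hγ (mul_pos hκ hp) (mul_pos hκ hq), htime,
          prod_mul_distrib, prod_const, card_univ, Fintype.card_fin,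
          rpow_div_two_eq_sqrt _ hγ.le, rpow_natCast,
          mehlerG_eq_prod_mehlerKernel d hκ (mul_pos hδ (hu.trans hut))]

/-- Semigroup property of the generalized Mehler kernel. -/
theorem mehlerG_semigroup (d : ℕ) (hd : d = 1 ∨ d = 2 ∨ d = 3) (κ γ δ t u : ℝ)
    (hκ : 0 < κ) (hγ : 0 < γ) (hδ : 0 < δ) (hu : 0 < u) (hut : u < t)
    (x y : Fin d → ℝ) :
    ∫ z : Fin d → ℝ, mehlerG d κ (δ * (t - u)) γ x z * mehlerG d κ (δ * u) γ z y =
      γ ^ ((d : ℝ) / 2) * mehlerG d κ (δ * t) γ x y :=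
  mehlerG_semigroup_general d κ γ δ t u hκ hγ hδ hu hut x y
end

section
/- For every d ∈ {1,2,3} there exists a constant C > 0 such that for all κ > 0, all x, y ∈ ℝ^d and all t > 0, the Laplacian in x of the d-dimensional Mehler kernel satisfies |Δ_x G_κ^{(d)}(x,y;t,1)| ≤ C · κ · coth(κt) · G_κ^{(d)}(x,y;t,2). -/
open Real

/-- The Laplacian of `f : ℝ^d → ℝ` at `x`: the sum of the second partial derivatives
along the coordinate directions. -/
noncomputable def laplacian {d : ℕ} (f : (Fin d → ℝ) → ℝ) (x : Fin d → ℝ) : ℝ :=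
  ∑ j, iteratedDeriv 2 (fun s => f (Function.update x j s)) (x j)

/-!
Each coordinate factor of the kernel is `exp (-φ)` with `φ` quadratic, so
`Δ_x G(·;1) = G(·;1) · ∑ⱼ (φⱼ'² - φⱼ'')`. With `a = tanh (κt/2)` and `b = coth (κt/2)` one has
`0 ≤ a ≤ b` and `a + b = 2 coth (κt)`, whence `|φⱼ'² - φⱼ''| ≤ κ coth (κt) (1 + 8 uⱼ)`, where
`G(·;1) = G(·;2) · exp (-∑ⱼ uⱼ)`. Since `(8u + d) e^{-u} ≤ 8 + d` for `u ≥ 0`, the estimate holds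
with `C = 8 + d` in every dimension.
-/

open Finset

theorem iteratedDeriv_two_exp_comp {φ φ' : ℝ → ℝ} {φ'' x : ℝ}
    (hφ : ∀ s, HasDerivAt φ (φ' s) s) (hφ' : HasDerivAt φ' φ'' x) :
    iteratedDeriv 2 (fun s => exp (φ s)) x = exp (φ x) * (φ' x ^ 2 + φ'') := by
  have hderiv : deriv (fun s => exp (φ s)) = fun s => exp (φ s) * φ' s :=
    funext fun s => (hφ s).exp.deriv
  rw [iteratedDeriv_succ, iteratedDeriv_one, hderiv]
  exact ((hφ x).exp.mul hφ').deriv.trans (by ring)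

theorem iteratedDeriv_two_exp_neg_mul_quadratic (c a b y x : ℝ) :
    iteratedDeriv 2 (fun s => exp (-c * ((s + y) ^ 2 * a + (s - y) ^ 2 * b))) x =
      exp (-c * ((x + y) ^ 2 * a + (x - y) ^ 2 * b)) *
        ((2 * c * ((x + y) * a + (x - y) * b)) ^ 2 - 2 * c * (a + b)) := by
  have hφ : ∀ s : ℝ, HasDerivAt (fun s => -c * ((s + y) ^ 2 * a + (s - y) ^ 2 * b))
      (-c * (2 * (s + y) * a + 2 * (s - y) * b)) s := fun s => by
    refine ((((((hasDerivAt_id' s).add_const y).pow 2).mul_const a).add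
      ((((hasDerivAt_id' s).sub_const y).pow 2).mul_const b)).const_mul (-c)).congr_deriv ?_
    norm_num
  have hφ' : HasDerivAt (fun s => -c * (2 * (s + y) * a + 2 * (s - y) * b))
      (-c * (2 * a + 2 * b)) x := by
    refine ((((((hasDerivAt_id' x).add_const y).const_mul 2).mul_const a).add
      ((((hasDerivAt_id' x).sub_const y).const_mul 2).mul_const b)).const_mul (-c)).congr_deriv ?_
    ring
  rw [iteratedDeriv_two_exp_comp hφ hφ']
  ring

theorem laplacian_const_mul_prod {d : ℕ} (C : ℝ) (g : Fin d → ℝ → ℝ) (r : Fin d → ℝ)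
    (x : Fin d → ℝ) (hg : ∀ j, iteratedDeriv 2 (g j) (x j) = g j (x j) * r j) :
    laplacian (fun x' => C * ∏ j, g j (x' j)) x = (C * ∏ j, g j (x j)) * ∑ j, r j := by
  simp only [laplacian, mul_sum]
  refine sum_congr rfl fun j _ => ?_
  have hsplit : (fun s => C * ∏ k, g k (Function.update x j s k)) =
      fun s => (C * ∏ k ∈ univ.erase j, g k (x k)) * g j s := by
    funext s
    rw [← mul_prod_erase univ _ (mem_univ j), Function.update_self,
      prod_congr rfl fun k hk => by rw [Function.update_of_ne (ne_of_mem_erase hk)]]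
    ring
  rw [hsplit, iteratedDeriv_const_mul_field, hg, ← mul_prod_erase univ _ (mem_univ j)]
  ring

theorem laplacian_mehlerG_one (d : ℕ) (κ t : ℝ) (x y : Fin d → ℝ) :
    laplacian (fun x' => mehlerG d κ t 1 x' y) x =
      mehlerG d κ t 1 x y * ∑ j,
        ((κ / 2 * ((x j + y j) * tanh (κ * t / 2) +
            (x j - y j) * (cosh (κ * t / 2) / sinh (κ * t / 2)))) ^ 2
          - κ / 2 * (tanh (κ * t / 2) + cosh (κ * t / 2) / sinh (κ * t / 2))) := by
  unfold mehlerG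
  refine laplacian_const_mul_prod _
    (fun j s => exp (-(κ / (4 * 1)) * ((s + y j) ^ 2 * tanh (κ * t / 2) +
      (s - y j) ^ 2 * (cosh (κ * t / 2) / sinh (κ * t / 2))))) _ x fun j => ?_
  rw [iteratedDeriv_two_exp_neg_mul_quadratic]
  ring_nf

theorem mehlerG_one_eq_two_mul_exp (d : ℕ) (κ t : ℝ) (x y : Fin d → ℝ) :
    mehlerG d κ t 1 x y = mehlerG d κ t 2 x y *
      exp (-∑ j, κ / 8 * ((x j + y j) ^ 2 * tanh (κ * t / 2) +
        (x j - y j) ^ 2 * (cosh (κ * t / 2) / sinh (κ * t / 2)))) := by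
  simp only [mehlerG, ← exp_sum, mul_assoc, ← exp_add, ← sub_eq_add_neg, ← sum_sub_distrib]
  congr 3
  funext j
  ring

theorem mehlerG_nonneg (d : ℕ) {κ t : ℝ} (hκ : 0 ≤ κ) (ht : 0 ≤ t) (γ : ℝ) (x y : Fin d → ℝ) :
    0 ≤ mehlerG d κ t γ x y := by
  have : 0 ≤ sinh (κ * t) := sinh_nonneg_iff.mpr (mul_nonneg hκ ht)
  unfold mehlerG
  positivity

-- Both sides vanish when `sinh θ = 0`, by the convention `x / 0 = 0`.
theorem tanh_add_cosh_div_sinh (θ : ℝ) :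
    tanh θ + cosh θ / sinh θ = 2 * (cosh (2 * θ) / sinh (2 * θ)) := by
  rw [tanh_eq_sinh_div_cosh, cosh_two_mul, sinh_two_mul]
  rcases eq_or_ne (sinh θ) 0 with h | h
  · simp [h]
  · field_simp [(cosh_pos θ).ne']
    ring

theorem tanh_le_cosh_div_sinh {θ : ℝ} (hθ : 0 < θ) : tanh θ ≤ cosh θ / sinh θ := by
  rw [tanh_eq_sinh_div_cosh, div_le_div_iff₀ (cosh_pos θ) (sinh_pos_iff.mpr hθ)]
  nlinarith [cosh_sq θ]

theorem abs_sq_sub_le_of_le {a b c : ℝ} (ha : 0 ≤ a) (hab : a ≤ b) (hc : 0 ≤ c) (p m : ℝ) :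
    |(c * (p * a + m * b)) ^ 2 - c * (a + b)| ≤
      c * (a + b) * (2 * c * (p ^ 2 * a + m ^ 2 * b) + 1) := by
  have hb : 0 ≤ b := ha.trans hab
  have hQ : 0 ≤ p ^ 2 * a + m ^ 2 * b := by positivity
  have hsq : (p * a + m * b) ^ 2 ≤ 2 * b * (p ^ 2 * a + m ^ 2 * b) := by
    nlinarith [sq_nonneg (p * a - m * b),
      mul_nonneg (mul_nonneg (sq_nonneg p) ha) (sub_nonneg.2 hab)]
  have hc2 : 0 ≤ c * c := mul_nonneg hc hc
  rw [abs_le]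
  constructor
  · nlinarith [sq_nonneg (c * (p * a + m * b)), mul_nonneg hc (add_nonneg ha hb), mul_nonneg hc2 hQ]
  · nlinarith [mul_le_mul_of_nonneg_left hsq hc2, mul_nonneg hc2 ha, mul_nonneg hc2 hQ]

theorem add_mul_mul_exp_neg_le {A B u : ℝ} (hA : 0 ≤ A) (hB : 0 ≤ B) (hu : 0 ≤ u) :
    (A * u + B) * exp (-u) ≤ A + B := by
  have hue : u * exp (-u) ≤ 1 := by
    rw [exp_neg, ← div_eq_mul_inv, div_le_one (exp_pos u)]
    linarith [add_one_le_exp u]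
  have he : exp (-u) ≤ 1 := exp_le_one_iff.mpr (neg_nonpos.mpr hu)
  nlinarith [mul_le_mul_of_nonneg_left hue hA, mul_le_mul_of_nonneg_left he hB]

theorem abs_laplacian_mehlerG_le (d : ℕ) {κ t : ℝ} (hκ : 0 < κ) (ht : 0 < t) (x y : Fin d → ℝ) :
    |laplacian (fun x' => mehlerG d κ t 1 x' y) x| ≤
      (8 + d) * κ * (cosh (κ * t) / sinh (κ * t)) * mehlerG d κ t 2 x y := by
  set θ := κ * t / 2
  have hθ : 0 < θ := by positivity
  have ha : 0 ≤ tanh θ := by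
    rw [tanh_eq_sinh_div_cosh]
    exact (div_pos (sinh_pos_iff.mpr hθ) (cosh_pos θ)).le
  have hab := tanh_le_cosh_div_sinh hθ
  set a := tanh θ
  set b := cosh θ / sinh θ
  have hcoth : κ * (cosh (κ * t) / sinh (κ * t)) = κ / 2 * (a + b) := by
    rw [tanh_add_cosh_div_sinh, show 2 * θ = κ * t by ring]
    ring
  set u := ∑ j, κ / 8 * ((x j + y j) ^ 2 * a + (x j - y j) ^ 2 * b)
  have hu : 0 ≤ u := sum_nonneg fun j _ => by positivity
  have hsum : |∑ j, ((κ / 2 * ((x j + y j) * a + (x j - y j) * b)) ^ 2 - κ / 2 * (a + b))| ≤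
      κ / 2 * (a + b) * (8 * u + d) :=
    calc _ ≤ ∑ j, |(κ / 2 * ((x j + y j) * a + (x j - y j) * b)) ^ 2 - κ / 2 * (a + b)| :=
          abs_sum_le_sum_abs _ _
      _ ≤ ∑ j, κ / 2 * (a + b) *
            (2 * (κ / 2) * ((x j + y j) ^ 2 * a + (x j - y j) ^ 2 * b) + 1) :=
          sum_le_sum fun j _ => abs_sq_sub_le_of_le ha hab (by positivity) _ _
      _ = κ / 2 * (a + b) * (8 * u + d) := by
          simp only [← mul_sum, sum_add_distrib, sum_const, card_univ, Fintype.card_fin,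
            nsmul_eq_mul, mul_one, u]
          ring
  have hG2 := mehlerG_nonneg d hκ.le ht.le 2 x y
  rw [laplacian_mehlerG_one, mehlerG_one_eq_two_mul_exp, abs_mul, abs_mul, abs_of_nonneg hG2,
    abs_of_pos (exp_pos _), mul_assoc _ κ, hcoth]
  calc _ ≤ mehlerG d κ t 2 x y * exp (-u) * (κ / 2 * (a + b) * (8 * u + d)) := by gcongr
    _ = κ / 2 * (a + b) * ((8 * u + d) * exp (-u)) * mehlerG d κ t 2 x y := by ring
    _ ≤ κ / 2 * (a + b) * (8 + d) * mehlerG d κ t 2 x y := by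
      gcongr
      exact add_mul_mul_exp_neg_le (by norm_num) d.cast_nonneg hu
    _ = _ := by ring

theorem mehler_laplacian_bound_general (d : ℕ) :
    ∃ C > 0, ∀ κ > (0 : ℝ), ∀ x y : Fin d → ℝ, ∀ t > (0 : ℝ),
      |laplacian (fun x' => mehlerG d κ t 1 x' y) x| ≤
        C * κ * (Real.cosh (κ * t) / Real.sinh (κ * t)) * mehlerG d κ t 2 x y :=
  ⟨8 + d, by positivity, fun _ hκ x y _ ht => abs_laplacian_mehlerG_le d hκ ht x y⟩

/-- Laplacian estimate for the Mehler kernel. -/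
theorem mehler_laplacian_bound (d : ℕ) (hd : d = 1 ∨ d = 2 ∨ d = 3) :
    ∃ C > 0, ∀ κ > (0 : ℝ), ∀ x y : Fin d → ℝ, ∀ t > (0 : ℝ),
      |laplacian (fun x' => mehlerG d κ t 1 x' y) x| ≤
        C * κ * (Real.cosh (κ * t) / Real.sinh (κ * t)) * mehlerG d κ t 2 x y :=
  mehler_laplacian_bound_general d
end
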